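/- Suppose $l_n: \Theta \to [0,\infty)$ are measurable with $l_n \le 1$, $\pi$ is a probability density on $\Theta \subseteq \mathbb{R}^d$, and there exist sets $A_n \subseteq B(\theta_o,\epsilon_n)$ with $\epsilon_n \to 0$ such that $l_n > 0$ on $A_n$, $\pi > 0$ on a neighborhood of $\theta_o$, $A_n$ has positive Lebesgue measure, and $l_n = 0$ outside $B(\theta_o, \epsilon)$ for all $n \ge n(\epsilon)$, for every $\epsilon > 0$. Then the normalized posteriors $\Pi_n(d\theta) \propto l_n(\theta)\pi(\theta)\,d\theta$ are well-defined for $n$ large and converge weakly to $\delta_{\theta_o}$. -/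

import Mathlib

open MeasureTheory Filter Topology

/-! The unnormalized posteriors `l n * π` are integrable because `l n ≤ 1`. Since the sets `A n`
eventually lie in the region where `π > 0`, the normalizing constants are eventually positive. The
posteriors concentrate: once `l n` vanishes outside `B(θ_o, δ)`, where `|s - s θ_o| ≤ η`, the
posterior mean of `s` is within `η` of `s θ_o`. -/

theorem integral_pos_of_pos_on {X : Type*} [MeasurableSpace X] {μ : Measure X} {f : X → ℝ}
    {A : Set X} (hf_nonneg : 0 ≤ f) (hf : Integrable f μ) (hA : 0 < μ A)
    (hfA : ∀ x ∈ A, 0 < f x) : 0 < ∫ x, f x ∂μ :=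
  (integral_pos_iff_support_of_nonneg hf_nonneg hf).2 <|
    hA.trans_le <| measure_mono fun x hx => (hfA x hx).ne'

section Concentration

variable {X : Type*} [PseudoMetricSpace X] [MeasurableSpace X] {μ : Measure X}

theorem abs_integral_mul_sub_le_of_eq_zero_off_ball {f s : X → ℝ} {x₀ : X} {δ η : ℝ}
    (hf_nonneg : ∀ x, 0 ≤ f x) (hf : Integrable f μ)
    (hsf : Integrable (fun x => s x * f x) μ)
    (hf_zero : ∀ x ∉ Metric.ball x₀ δ, f x = 0)
    (hs : ∀ x ∈ Metric.ball x₀ δ, |s x - s x₀| ≤ η) :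
    |∫ x, s x * f x ∂μ - s x₀ * ∫ x, f x ∂μ| ≤ η * ∫ x, f x ∂μ := by
  have hpointwise : ∀ x, ‖(s x - s x₀) * f x‖ ≤ η * f x := by
    intro x
    rw [Real.norm_eq_abs, abs_mul, abs_of_nonneg (hf_nonneg x)]
    by_cases hx : x ∈ Metric.ball x₀ δ
    · exact mul_le_mul_of_nonneg_right (hs x hx) (hf_nonneg x)
    · simp [hf_zero x hx]
  calc |∫ x, s x * f x ∂μ - s x₀ * ∫ x, f x ∂μ|
      = ‖∫ x, (s x - s x₀) * f x ∂μ‖ := by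
        simp only [sub_mul]
        rw [integral_sub hsf (hf.const_mul _), integral_const_mul, Real.norm_eq_abs]
    _ ≤ ∫ x, η * f x ∂μ :=
        norm_integral_le_of_norm_le (hf.const_mul η) (ae_of_all _ hpointwise)
    _ = η * ∫ x, f x ∂μ := integral_const_mul _ _

theorem tendsto_integral_mul_div_integral_of_concentrating {ι : Type*} {L : Filter ι}
    {f : ι → X → ℝ} {s : X → ℝ} {x₀ : X}
    (hf_nonneg : ∀ n x, 0 ≤ f n x) (hf : ∀ n, Integrable (f n) μ)
    (hsf : ∀ n, Integrable (fun x => s x * f n x) μ)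
    (hf_pos : ∀ᶠ n in L, 0 < ∫ x, f n x ∂μ)
    (hf_conc : ∀ δ > 0, ∀ᶠ n in L, ∀ x ∉ Metric.ball x₀ δ, f n x = 0)
    (hs : ContinuousAt s x₀) :
    Tendsto (fun n => (∫ x, s x * f n x ∂μ) / ∫ x, f n x ∂μ) L (𝓝 (s x₀)) := by
  rw [Metric.tendsto_nhds]
  intro ε hε
  obtain ⟨δ, hδ, hsδ⟩ := Metric.continuousAt_iff.mp hs (ε / 2) (half_pos hε)
  filter_upwards [hf_pos, hf_conc δ hδ] with n hpos hzero
  have hclose := abs_integral_mul_sub_le_of_eq_zero_off_ball (hf_nonneg n) (hf n) (hsf n)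
    hzero fun x hx => (hsδ (Metric.mem_ball.mp hx)).le
  rw [Real.dist_eq, ← mul_div_cancel_right₀ (s x₀) hpos.ne', ← sub_div, abs_div,
    abs_of_pos hpos, div_lt_iff₀ hpos]
  linarith [mul_lt_mul_of_pos_right (half_lt_self hε) hpos]

end Concentration

theorem abc_el_deterministic_consistency_skeleton_general
    {d : ℕ} (θo : EuclideanSpace ℝ (Fin d))
    (l : ℕ → EuclideanSpace ℝ (Fin d) → ℝ)
    (π : EuclideanSpace ℝ (Fin d) → ℝ)
    (hl_meas : ∀ n, Measurable (l n))
    (hl_nonneg : ∀ n θ, 0 ≤ l n θ) (hl_le_one : ∀ n θ, l n θ ≤ 1)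
    (hπ_nonneg : ∀ θ, 0 ≤ π θ)
    (hπ_int : Integrable π volume)
    (hπ_pos : ∃ U ∈ 𝓝 θo, ∀ θ ∈ U, 0 < π θ)
    (A : ℕ → Set (EuclideanSpace ℝ (Fin d))) (ε' : ℕ → ℝ)
    (hε' : Tendsto ε' atTop (𝓝 0))
    (hA_sub : ∀ n, A n ⊆ Metric.ball θo (ε' n))
    (hA_pos : ∀ n, 0 < volume (A n))
    (hlA : ∀ n, ∀ θ ∈ A n, 0 < l n θ)
    (hl_zero : ∀ ε > (0 : ℝ), ∃ N, ∀ n ≥ N,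
      ∀ θ ∉ Metric.ball θo ε, l n θ = 0) :
    (∃ N, ∀ n ≥ N, 0 < ∫ θ, l n θ * π θ) ∧
    ∀ s : BoundedContinuousFunction (EuclideanSpace ℝ (Fin d)) ℝ,
      Tendsto (fun n => (∫ θ, s θ * (l n θ * π θ)) / ∫ θ, l n θ * π θ)
        atTop (𝓝 (s θo)) := by
  have hf_nonneg : ∀ n θ, 0 ≤ l n θ * π θ := fun n θ =>
    mul_nonneg (hl_nonneg n θ) (hπ_nonneg θ)
  have hf_int : ∀ n, Integrable (fun θ => l n θ * π θ) volume := fun n =>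
    hπ_int.bdd_mul (hl_meas n).aestronglyMeasurable <| ae_of_all _ fun θ => by
      simpa [abs_of_nonneg (hl_nonneg n θ)] using hl_le_one n θ
  obtain ⟨U, hU, hπU⟩ := hπ_pos
  obtain ⟨r, hr, hrU⟩ := Metric.mem_nhds_iff.mp hU
  have hpos : ∀ᶠ n in atTop, 0 < ∫ θ, l n θ * π θ := by
    filter_upwards [hε'.eventually (eventually_lt_nhds hr)] with n hn
    refine integral_pos_of_pos_on (hf_nonneg n) (hf_int n) (hA_pos n) fun θ hθ => ?_
    exact mul_pos (hlA n θ hθ)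
      (hπU θ (hrU (Metric.ball_subset_ball hn.le (hA_sub n hθ))))
  have hconc : ∀ δ > 0, ∀ᶠ n in atTop, ∀ θ ∉ Metric.ball θo δ, l n θ * π θ = 0 := by
    intro δ hδ
    obtain ⟨N, hN⟩ := hl_zero δ hδ
    exact eventually_atTop.2 ⟨N, fun n hn θ hθ => by rw [hN n hn θ hθ, zero_mul]⟩
  refine ⟨hpos.exists_forall_of_atTop, fun s => ?_⟩
  exact tendsto_integral_mul_div_integral_of_concentrating hf_nonneg hf_int
    (fun n => (hf_int n).bdd_mul s.continuous.aestronglyMeasurable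
      (ae_of_all _ s.norm_coe_le_norm)) hpos hconc s.continuous.continuousAt

/-- deterministic skeleton of the consistency proof: on
`Θ = ℝᵈ` with Lebesgue measure, suppose `l n` are measurable likelihoods with
values in `[0, 1]`, `π` is a probability density positive in a neighbourhood
of `θ_o`, and there are sets `A n ⊆ B(θ_o, ε_n)` of positive Lebesgue measure
with `ε_n → 0` on which `l n > 0`, while for every `ε > 0` one has `l n = 0`
outside `B(θ_o, ε)` for all large `n`.  Then for `n` large the normalized
posterior is well defined (its normalizing constant is positive) and the
posteriors converge weakly to `δ_{θ_o}`: posterior expectations of bounded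
continuous functions tend to the value at `θ_o`. -/
theorem abc_el_deterministic_consistency_skeleton
    {d : ℕ} (θo : EuclideanSpace ℝ (Fin d))
    (l : ℕ → EuclideanSpace ℝ (Fin d) → ℝ)
    (π : EuclideanSpace ℝ (Fin d) → ℝ)
    (hl_meas : ∀ n, Measurable (l n))
    (hl_nonneg : ∀ n θ, 0 ≤ l n θ) (hl_le_one : ∀ n θ, l n θ ≤ 1)
    (hπ_meas : Measurable π) (hπ_nonneg : ∀ θ, 0 ≤ π θ)
    (hπ_int : Integrable π volume) (hπ_prob : ∫ θ, π θ = 1)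
    (hπ_pos : ∃ U ∈ 𝓝 θo, ∀ θ ∈ U, 0 < π θ)
    (A : ℕ → Set (EuclideanSpace ℝ (Fin d))) (ε' : ℕ → ℝ)
    (hε' : Tendsto ε' atTop (𝓝 0))
    (hA_sub : ∀ n, A n ⊆ Metric.ball θo (ε' n))
    (hA_pos : ∀ n, 0 < volume (A n))
    (hlA : ∀ n, ∀ θ ∈ A n, 0 < l n θ)
    (hl_zero : ∀ ε > (0 : ℝ), ∃ N, ∀ n ≥ N,
      ∀ θ ∉ Metric.ball θo ε, l n θ = 0) :
    (∃ N, ∀ n ≥ N, 0 < ∫ θ, l n θ * π θ) ∧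
    ∀ s : BoundedContinuousFunction (EuclideanSpace ℝ (Fin d)) ℝ,
      Tendsto (fun n => (∫ θ, s θ * (l n θ * π θ)) / ∫ θ, l n θ * π θ)
        atTop (𝓝 (s θo)) :=
  abc_el_deterministic_consistency_skeleton_general θo l π hl_meas hl_nonneg hl_le_one hπ_nonneg
    hπ_int hπ_pos A ε' hε' hA_sub hA_pos hlA hl_zero
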